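/- arXiv:1802.01867 — 2 statements merged into one kernel-verified Lean document; each statement's English description precedes it below -/
import Mathlib

section
/- For r > 2 and any λ ∈ ℂ, let G_λ be the r×r matrix whose first r−1 diagonal entries are 1, whose bottom-right entry is 0, which has λ in position (2,1), and which has zeros elsewhere; then G_{λ₁} and G_{λ₂} are not proportional when λ₁ ≠ λ₂, yet cof(G_{λ₁}) = cof(G_{λ₂}) for all λ₁, λ₂. -/
/-- The cofactor matrix of a square matrix: the transpose of the adjugate. -/
noncomputable def Matrix.cof {r : ℕ} (G : Matrix (Fin r) (Fin r) ℂ) :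
    Matrix (Fin r) (Fin r) ℂ :=
  G.adjugate.transpose

/-- The matrix `G_λ`: identity on the first `r - 1` diagonal entries, `0` at the
bottom-right corner, `λ` in position `(2,1)` (indices `(1,0)`), zeros elsewhere. -/
def Gmat (r : ℕ) (lam : ℂ) : Matrix (Fin r) (Fin r) ℂ :=
  fun i j =>
    if i = j ∧ (i : ℕ) < r - 1 then 1
    else if (i : ℕ) = 1 ∧ (j : ℕ) = 0 then lam
    else 0

lemma adj_Gmat {r : ℕ} (hr : 2 < r) (lam : ℂ) :
    (Gmat r lam).adjugate = Matrix.of fun i j : Fin r =>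
      if (i : ℕ) = r - 1 ∧ (j : ℕ) = r - 1 then (1 : ℂ) else 0 := by
  have hrpos : 0 < r := by omega
  set last : Fin r := ⟨r - 1, by omega⟩ with hlast
  have hrow : ∀ k, Gmat r lam last k = 0 := by
    intro k
    simp only [Gmat, hlast]
    split_ifs with h1 h2
    · omega
    · omega
    · rfl
  ext i j
  rw [Matrix.adjugate_apply]
  by_cases hj : j = last
  · by_cases hi : i = last
    · subst hi; subst hj
      have hdet : ((Gmat r lam).updateRow last (Pi.single last 1)).det = 1 := by
        rw [Matrix.det_of_lowerTriangular]
        · rw [Finset.prod_eq_one]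
          intro k _
          by_cases hk : k = last
          · subst hk
            rw [Matrix.updateRow_self, Pi.single_eq_same]
          · rw [Matrix.updateRow_ne hk]
            have hklt : (k : ℕ) < r - 1 := by
              have := k.2
              have : (k : ℕ) ≠ r - 1 := fun h => hk (Fin.ext h)
              omega
            simp [Gmat, hklt]
        · intro a b hab
          simp only [OrderDual.toDual_lt_toDual] at hab
          by_cases ha : a = last
          · subst ha
            rw [Matrix.updateRow_self, Pi.single_eq_of_ne (ne_of_gt hab)]
          · rw [Matrix.updateRow_ne ha]
            have hab' : (a : ℕ) < (b : ℕ) := hab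
            simp only [Gmat]
            split_ifs with h1 h2
            · exact absurd h1.1 (ne_of_lt hab)
            · omega
            · rfl
      rw [hdet]
      simp [hlast]
    · subst hj
      have hdet : ((Gmat r lam).updateRow last (Pi.single i 1)).det = 0 := by
        apply Matrix.det_eq_zero_of_column_eq_zero last
        intro k
        by_cases hk : k = last
        · subst hk
          rw [Matrix.updateRow_self, Pi.single_eq_of_ne (fun h => hi h.symm)]
        · rw [Matrix.updateRow_ne hk]
          simp only [Gmat, hlast]
          split_ifs with h1 h2
          · exact absurd h1.1 hk
          · omega
          · rfl
      rw [hdet, eq_comm, Matrix.of_apply, if_neg]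
      rintro ⟨h1, -⟩
      exact hi (Fin.ext (by simpa [hlast] using h1))
  · have hdet : ((Gmat r lam).updateRow j (Pi.single i 1)).det = 0 := by
      apply Matrix.det_eq_zero_of_row_eq_zero last
      intro k
      rw [Matrix.updateRow_ne (fun h => hj h.symm), hrow]
    rw [hdet, eq_comm, Matrix.of_apply, if_neg]
    rintro ⟨-, h2⟩
    exact hj (Fin.ext (by simpa [hlast] using h2))

/-- For `r > 2`: the matrices `G_{λ₁}` and `G_{λ₂}` are not proportional when
`λ₁ ≠ λ₂`, yet they all have the same cofactor matrix. -/
theorem Gmat_not_proportional_cof_eq {r : ℕ} (hr : 2 < r) :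
    (∀ lam₁ lam₂ : ℂ, lam₁ ≠ lam₂ → ¬ ∃ c : ℂ, Gmat r lam₂ = c • Gmat r lam₁) ∧
    (∀ lam₁ lam₂ : ℂ, Matrix.cof (Gmat r lam₁) = Matrix.cof (Gmat r lam₂)) := by
  constructor
  · rintro lam₁ lam₂ hne ⟨c, hc⟩
    have h00 : Gmat r lam₂ ⟨0, by omega⟩ ⟨0, by omega⟩ =
        c * Gmat r lam₁ ⟨0, by omega⟩ ⟨0, by omega⟩ := by
      rw [hc]; rfl
    have h10 : Gmat r lam₂ ⟨1, by omega⟩ ⟨0, by omega⟩ =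
        c * Gmat r lam₁ ⟨1, by omega⟩ ⟨0, by omega⟩ := by
      rw [hc]; rfl
    have e00 : ∀ lam, Gmat r lam ⟨0, by omega⟩ ⟨0, by omega⟩ = 1 := by
      intro lam; simp [Gmat]; omega
    have e10 : ∀ lam, Gmat r lam ⟨1, by omega⟩ ⟨0, by omega⟩ = lam := by
      intro lam
      simp [Gmat, Fin.ext_iff]
    rw [e00, e00, mul_one] at h00
    rw [e10, e10, ← h00, one_mul] at h10
    exact hne h10.symm
  · intro lam₁ lam₂
    unfold Matrix.cof
    rw [adj_Gmat hr, adj_Gmat hr]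
end

section
/- For r > 2, there is no algebraic (morphism of varieties) automorphism of the projective space ℙ(Mat_r(ℂ)) extending the map [G] ↦ [(G⁻¹)ᵀ] defined on PGL_r(ℂ). -/
/-!
A polynomial map `F` extending `[G] ↦ [G⁻ᵀ]` is continuous, and proportionality of two matrices
(vanishing of all `2 × 2` minors of the pair) is a closed condition. Approaching
`M₀ = diag(0, 0, 1, …, 1)` along `t ↦ diag(t², t, 1, …, 1)` and along `t ↦ diag(t, t, 1, …, 1)`,
the inverse transposes point in the directions `diag(1, t, t², …, t²)` and `diag(1, 1, t, …, t)`.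
So `F M₀` is proportional both to `E₀₀` and to `E₀₀ + E₁₁`, hence vanishes, although `M₀ ≠ 0`
as soon as `r ≥ 3`.
-/

open MvPolynomial

/-- Two nonzero matrices span the same line (represent the same point of
`ℙ(Mat_r(ℂ))`). -/
def SameProjClass {r : ℕ} (M N : Matrix (Fin r) (Fin r) ℂ) : Prop :=
  ∃ c : ℂˣ, N = (c : ℂ) • M

namespace Matrix

variable {m n K : Type*}

/-- `A` and `B` are linearly dependent, phrased through the `2 × 2` minors of the pair so that
it is a closed condition. -/
def Proportional [Mul K] (A B : Matrix m n K) : Prop :=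
  ∀ i j k l, A i j * B k l = A k l * B i j

theorem Proportional.of_smul_right [CommMonoidWithZero K] [IsCancelMulZero K]
    {A B : Matrix m n K} {s : K} (h : Proportional A (s • B)) (hs : s ≠ 0) :
    Proportional A B := by
  intro i j k l
  have := h i j k l
  simp only [smul_apply, smul_eq_mul] at this
  exact mul_left_cancel₀ hs (by rwa [mul_left_comm, mul_left_comm (A k l)] at this)

theorem Proportional.of_forall_ne [TopologicalSpace K] [Mul K] [ContinuousMul K] [T2Space K]
    {X : Type*} [TopologicalSpace X] {x : X} (hx : Dense ({x}ᶜ : Set X))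
    {f g : X → Matrix m n K} (hf : Continuous f) (hg : Continuous g)
    (h : ∀ y ≠ x, Proportional (f y) (g y)) : Proportional (f x) (g x) := by
  intro i j k l
  refine congrFun (Continuous.ext_on hx ?_ ?_ fun y hy => h y hy i j k l) x
  · exact (hf.matrix_elem i j).mul (hg.matrix_elem k l)
  · exact (hf.matrix_elem k l).mul (hg.matrix_elem i j)

theorem Proportional.eq_zero [Field K] {A B C : Matrix m n K} (hB : Proportional A B)
    (hC : Proportional A C) {k : m} {l : n} (hBkl : B k l ≠ 0)
    (hBC : ¬ Proportional B C) : A = 0 := by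
  have hAkl : A k l = 0 := by
    by_contra hA
    refine hBC fun i j i' j' => ?_
    have hBij := hB i j k l
    have hBij' := hB i' j' k l
    have hCij := hC i j k l
    have hCij' := hC i' j' k l
    apply mul_left_cancel₀ (mul_ne_zero hA hA)
    linear_combination (-(A k l * C i' j')) * hBij - (A i j * B k l) * hCij' +
      (A k l * C i j) * hBij' + (A i' j' * B k l) * hCij
  ext i j
  simpa [hAkl, hBkl] using hB i j k l

theorem inv_diagonal_pow [Fintype n] [DecidableEq n] [Field K] (e : n → ℕ) {N : ℕ}
    (he : ∀ i, e i ≤ N) {t : K} (ht : t ≠ 0) :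
    (diagonal fun i => t ^ e i)⁻¹ = (t ^ N)⁻¹ • diagonal fun i => t ^ (N - e i) := by
  refine inv_eq_right_inv ?_
  rw [mul_smul_comm, diagonal_mul_diagonal]
  simp_rw [← pow_add, Nat.add_sub_cancel' (he _)]
  rw [← smul_one_eq_diagonal, smul_smul, inv_mul_cancel₀ (pow_ne_zero _ ht), one_smul]

end Matrix

open Matrix

theorem SameProjClass.proportional {r : ℕ} {M N : Matrix (Fin r) (Fin r) ℂ}
    (h : SameProjClass M N) : Proportional M N := by
  obtain ⟨c, rfl⟩ := h
  intro i j k l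
  simp only [Matrix.smul_apply, smul_eq_mul]
  ring

theorem continuous_of_forall_eq_eval {R m n m' n' : Type*} [CommSemiring R] [TopologicalSpace R]
    [IsTopologicalSemiring R] {F : Matrix m n R → Matrix m' n' R}
    {P : m' → n' → MvPolynomial (m × n) R}
    (hFP : ∀ M i j, F M i j = eval (fun p => M p.1 p.2) (P i j)) : Continuous F := by
  refine continuous_matrix fun i j => ?_
  simp_rw [hFP]
  exact (continuous_eval _).comp (continuous_pi fun p => continuous_id.matrix_elem p.1 p.2)

theorem proportional_apply_diagonal_zero_pow {n 𝕜 : Type*} [Fintype n] [DecidableEq n]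
    [NontriviallyNormedField 𝕜] {F : Matrix n n 𝕜 → Matrix n n 𝕜} (hF : Continuous F)
    (hext : ∀ G : Matrix n n 𝕜, IsUnit G.det → Proportional (F G) G⁻¹ᵀ)
    (e : n → ℕ) {N : ℕ} (he : ∀ i, e i ≤ N) :
    Proportional (F (diagonal fun i => 0 ^ e i)) (diagonal fun i => 0 ^ (N - e i)) := by
  refine Proportional.of_forall_ne (f := fun t : 𝕜 => F (diagonal fun i => t ^ e i))
    (g := fun t : 𝕜 => diagonal fun i => t ^ (N - e i)) (dense_compl_singleton 0)
    (hF.comp (continuous_pi fun i => continuous_pow (e i)).matrix_diagonal)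
    (continuous_pi fun i => continuous_pow (N - e i)).matrix_diagonal fun t ht => ?_
  have hdet : IsUnit (diagonal fun i => t ^ e i).det := by
    simp [isUnit_iff_ne_zero, Finset.prod_ne_zero_iff, ht]
  have := hext _ hdet
  rw [inv_diagonal_pow e he ht, transpose_smul, diagonal_transpose] at this
  exact this.of_smul_right (by simp [ht])

/-- For `r > 2`, there is no algebraic automorphism of the projective space
`ℙ(Mat_r(ℂ))` extending the inverse-transpose map `[G] ↦ [(G⁻¹)ᵀ]` on
`PGL_r(ℂ)`.  An algebraic self-map of `ℙ(Mat_r(ℂ))` is given by a matrix of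
homogeneous polynomials `P` of a common degree `d` in the matrix entries, with
no common zero away from `0`; being an automorphism it induces a bijection on
projective classes. -/
theorem no_algebraic_extension_of_inverse_transpose {r : ℕ} (hr : 2 < r) :
    ¬ ∃ (d : ℕ) (P : Fin r → Fin r → MvPolynomial (Fin r × Fin r) ℂ)
        (F : Matrix (Fin r) (Fin r) ℂ → Matrix (Fin r) (Fin r) ℂ),
      -- `F` is the polynomial map with homogeneous components `P i j` of degree `d`
      (∀ i j, (P i j).IsHomogeneous d) ∧
      (∀ M i j, F M i j = eval (fun p => M p.1 p.2) (P i j)) ∧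
      -- `F` induces a well-defined self-map of `ℙ(Mat_r(ℂ))`
      (∀ M, M ≠ 0 → F M ≠ 0) ∧
      -- the induced map on `ℙ(Mat_r(ℂ))` is bijective
      (∀ M N, M ≠ 0 → N ≠ 0 → SameProjClass (F M) (F N) → SameProjClass M N) ∧
      (∀ N, N ≠ 0 → ∃ M, M ≠ 0 ∧ SameProjClass (F M) N) ∧
      -- it extends the inverse-transpose map on `PGL_r(ℂ)`
      (∀ G : Matrix (Fin r) (Fin r) ℂ, IsUnit G.det →
        SameProjClass (F G) (G⁻¹).transpose) := by
  rintro ⟨d, P, F, -, hFP, hF0, -, -, hext⟩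
  obtain ⟨n, rfl⟩ : ∃ n, r = n + 3 := ⟨r - 3, by omega⟩
  have hF := continuous_of_forall_eq_eval hFP
  have hext' := fun G hG => (hext G hG).proportional
  -- exponents `(2, 1, 0, …, 0)` and `(1, 1, 0, …, 0)`, written with truncated subtraction
  have h₂ := proportional_apply_diagonal_zero_pow hF hext' (fun i => 2 - (i : ℕ)) (N := 2)
    (fun _ => Nat.sub_le _ _)
  have h₁ := proportional_apply_diagonal_zero_pow hF hext' (fun i => min 1 (2 - (i : ℕ))) (N := 1)
    (fun _ => min_le_left _ _)
  set M₀ : Matrix (Fin (n + 3)) (Fin (n + 3)) ℂ := diagonal fun i => 0 ^ (2 - (i : ℕ))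
  have hM₀ : (diagonal fun i : Fin (n + 3) => (0 : ℂ) ^ min 1 (2 - (i : ℕ))) = M₀ := by
    congr 1; funext i; simp [zero_pow_eq]
  rw [hM₀] at h₁
  refine hF0 M₀ (fun h => ?_) (h₂.eq_zero h₁ (k := 0) (l := 0) (by simp) fun h => ?_)
  · simpa [M₀] using congr_fun₂ h ⟨2, by omega⟩ ⟨2, by omega⟩
  · simpa using h 1 1 0 0
end
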